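/- arXiv:1309.2109 — 3 statements merged into one kernel-verified Lean document; each statement's English description precedes it below -/
import Mathlib

section
/- For all m ≥ 0, the Bernoulli numbers satisfy B_m = ∑_{n=0}^{m} D_n S(m,n), where D_n are the Daehee numbers and S(m,n) are the Stirling numbers of the second kind. -/
/-!
Substituting `e^t - 1` for `t` in `log(1 + t) = t · ∑ D_n t^n/n!` turns the left side into `t`,
so `∑ D_n (e^t - 1)^n/n!` is `t/(e^t - 1) = ∑ B_m t^m/m!`; expanding `(e^t - 1)^n` by the Stirling
numbers and comparing coefficients of `t^m` gives the identity. That `log(1 + (e^t - 1)) = t`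
holds because both sides vanish at `0` and have derivative `1`.
-/

open PowerSeries Finset

noncomputable def logOneAdd : PowerSeries ℚ :=
  PowerSeries.mk fun k => if k = 0 then 0 else (-1 : ℚ)^(k+1) / k

noncomputable def onePow (x : ℚ) : PowerSeries ℚ :=
  PowerSeries.mk fun k => (∏ i ∈ Finset.range k, (x - (i : ℚ))) / (Nat.factorial k : ℚ)

noncomputable def expX (x : ℚ) : PowerSeries ℚ :=
  PowerSeries.mk fun k => x ^ k / (Nat.factorial k : ℚ)

namespace PowerSeries

variable {A : Type*} [CommRing A]

theorem coeff_subst_eq_sum_range {a : A⟦X⟧} (ha : constantCoeff a = 0) (f : A⟦X⟧) (m : ℕ) :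
    coeff m (f.subst a) = ∑ d ∈ range (m + 1), coeff d f * coeff m (a ^ d) := by
  rw [coeff_subst' (.of_constantCoeff_zero' ha)]
  refine finsum_eq_sum_of_support_subset _ fun d hd => ?_
  contrapose! hd
  simp only [coe_range, Set.mem_Iio, not_lt] at hd
  simp only [Function.mem_support, ne_eq, not_not, smul_eq_mul]
  rw [coeff_of_lt_order (φ := a ^ d) m, mul_zero]
  exact lt_of_lt_of_le (by exact_mod_cast (show m < d by omega))
    (le_order_pow_of_constantCoeff_eq_zero d ha)

variable [Algebra ℚ A]

theorem mk_neg_one_pow_mul_one_add_X :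
    (mk fun n => algebraMap ℚ A ((-1) ^ n)) * (1 + X) = 1 := by
  ext (_ | n) <;> simp [mul_add, coeff_succ_mul_X, pow_succ]

theorem log_subst_exp_sub_one : (log A).subst (exp A - 1) = X := by
  have hE : HasSubst (exp A - 1) := .exp_sub_one
  have : IsAddTorsionFree A := .of_module_rat A
  refine derivative.ext ?_ ?_
  · calc d⁄dX A ((log A).subst (exp A - 1))
        = substAlgHom hE ((mk fun n => algebraMap ℚ A ((-1) ^ n)) * (1 + X)) := by
          rw [derivative_subst hE, deriv_log, map_mul, map_add, map_one, substAlgHom_X,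
            coe_substAlgHom, map_sub, derivative_exp, derivative_one, sub_zero, add_sub_cancel]
      _ = d⁄dX A X := by rw [mk_neg_one_pow_mul_one_add_X, map_one, derivative_X]
  · rw [← coeff_zero_eq_constantCoeff_apply, coeff_subst_eq_sum_range (by simp)]
    simp

theorem exp_sub_one_ne_zero [Nontrivial A] : exp A - 1 ≠ 0 :=
  fun h => by simpa using congrArg (coeff 1) h

end PowerSeries

theorem logOneAdd_eq_log : logOneAdd = log ℚ := by
  ext n
  simp [logOneAdd]

theorem bernoulli_daehee_stirling2 (D B : ℕ → ℚ) (S : ℕ → ℕ → ℚ)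
    (hD : PowerSeries.mk (fun n => D n / (Nat.factorial n : ℚ)) * PowerSeries.X = logOneAdd) (hB : PowerSeries.mk (fun l => B l / (Nat.factorial l : ℚ)) * (PowerSeries.exp ℚ - 1) = PowerSeries.X) (hS : ∀ n : ℕ, (PowerSeries.exp ℚ - 1) ^ n = PowerSeries.C (Nat.factorial n : ℚ) * PowerSeries.mk (fun m => S m n / (Nat.factorial m : ℚ))) :
    ∀ m : ℕ, B m = ∑ n ∈ Finset.range (m + 1), D n * S m n := by
  have hE : HasSubst (exp ℚ - 1) := .exp_sub_one
  have hBD : mk (fun l => B l / l.factorial) =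
      (mk fun n => D n / n.factorial).subst (exp ℚ - 1) := by
    refine mul_right_cancel₀ exp_sub_one_ne_zero ?_
    calc _ = X := hB
      _ = substAlgHom hE (mk (fun n => D n / n.factorial) * X) := by
        rw [hD, logOneAdd_eq_log, coe_substAlgHom, log_subst_exp_sub_one]
      _ = _ := by rw [map_mul, substAlgHom_X, coe_substAlgHom]
  intro m
  have hm := congrArg (coeff m) hBD
  rw [coeff_mk, coeff_subst_eq_sum_range (by simp)] at hm
  simp only [hS, coeff_C_mul, coeff_mk] at hm
  rw [div_eq_iff (by positivity), sum_mul] at hm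
  rw [hm]
  refine sum_congr rfl fun n _ => ?_
  field_simp
end

section
/- For all n ≥ 0 and all x, the Daehee polynomial satisfies D_n(x) = B_n^{(n+2)}(x+1), where B_n^{(α)}(x) is the Bernoulli polynomial of order α. -/
open PowerSeries Finset

/-! Put `𝔅 = t/(eᵗ-1)` and `E_y = e^{yt}`, so that `B_n^{(a)}(y)/n!` is the `n`-th coefficient of
`E_y 𝔅^a`. The Riccati equation `t𝔅' = 𝔅 - t𝔅 - 𝔅²` yields a first-order recursion linking the
coefficients of `E_y 𝔅^(a+1)` and `E_y 𝔅^(a+2)`; on the diagonal it gives Nörlund's identity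
`B_n^{(n+1)}(x+1) = x(x-1)⋯(x-n+1)`. On the Daehee side, `(1+t) d/dt (log(1+t)(1+t)^x)` equals
`(1+t)^x + x log(1+t)(1+t)^x`. So both `D_n(x)/n!` and `B_n^{(n+2)}(x+1)/n!` satisfy the same
recursion, whose inhomogeneous term is the binomial coefficient `(x choose n+1)`, and they agree
at `n = 0`. -/

open scoped Nat

section Bernoulli

variable {A : Type*} [CommRing A] [Algebra ℚ A]

variable (A) in
theorem X_mul_derivative_bernoulliPowerSeries :
    X * d⁄dX A (bernoulliPowerSeries A) =
      bernoulliPowerSeries A - X * bernoulliPowerSeries A - bernoulliPowerSeries A ^ 2 := by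
  have h := bernoulliPowerSeries_mul_exp_sub_one A
  have h' := congrArg (d⁄dX A) h
  rw [Derivation.leibniz, derivative_X, map_sub, derivative_exp, derivative_one, sub_zero,
    smul_eq_mul, smul_eq_mul] at h'
  linear_combination bernoulliPowerSeries A * h' - (d⁄dX A (bernoulliPowerSeries A) +
    bernoulliPowerSeries A) * h

theorem eq_mul_bernoulliPowerSeries_pow_of_mul_exp_sub_one_pow {f g : A⟦X⟧} {α : ℕ}
    (h : f * (exp A - 1) ^ α = X ^ α * g) : f = g * bernoulliPowerSeries A ^ α := by
  apply mul_X_pow_cancel (k := α)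
  calc f * X ^ α = f * (exp A - 1) ^ α * bernoulliPowerSeries A ^ α := by
        rw [mul_assoc, ← mul_pow, mul_comm (exp A - 1), bernoulliPowerSeries_mul_exp_sub_one]
    _ = g * bernoulliPowerSeries A ^ α * X ^ α := by rw [h]; ring

end Bernoulli

local notation "𝔅" => bernoulliPowerSeries ℚ

theorem derivative_expX (y : ℚ) : d⁄dX ℚ (expX y) = C y * expX y := by
  ext n
  simp only [coeff_derivative, coeff_C_mul, expX, coeff_mk, Nat.factorial_succ, pow_succ]
  push_cast
  field_simp

theorem X_mul_derivative_expX_mul_bernoulli_pow (y : ℚ) (a : ℕ) :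
    X * d⁄dX ℚ (expX y * 𝔅 ^ (a + 1)) =
      C y * X * (expX y * 𝔅 ^ (a + 1)) +
        C ((a : ℚ) + 1) * (expX y * 𝔅 ^ (a + 1) - X * (expX y * 𝔅 ^ (a + 1)) -
          expX y * 𝔅 ^ (a + 2)) := by
  rw [Derivation.leibniz, Derivation.leibniz_pow, derivative_expX, Nat.add_sub_cancel,
    smul_eq_mul, smul_eq_mul, smul_eq_mul, nsmul_eq_mul]
  simp only [map_add, map_one, map_natCast]
  push_cast
  linear_combination ((a : ℚ⟦X⟧) + 1) * expX y * 𝔅 ^ a * X_mul_derivative_bernoulliPowerSeries ℚ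

theorem coeff_expX_mul_bernoulli_pow_succ (y : ℚ) (a k : ℕ) :
    ((k : ℚ) - a) * coeff (k + 1) (expX y * 𝔅 ^ (a + 1)) =
      (y - a - 1) * coeff k (expX y * 𝔅 ^ (a + 1)) -
        (a + 1) * coeff (k + 1) (expX y * 𝔅 ^ (a + 2)) := by
  have h := congrArg (coeff (k + 1)) (X_mul_derivative_expX_mul_bernoulli_pow y a)
  rw [coeff_succ_X_mul, coeff_derivative, map_add, mul_assoc, coeff_C_mul, coeff_succ_X_mul,
    coeff_C_mul, map_sub, map_sub, coeff_succ_X_mul] at h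
  linear_combination h

theorem coeff_onePow (x : ℚ) (n : ℕ) :
    coeff n (onePow x) = (∏ i ∈ range n, (x - i)) / n ! := by
  simp [onePow]

theorem coeff_expX_add_one_mul_bernoulli_pow_succ (x : ℚ) (n : ℕ) :
    coeff n (expX (x + 1) * 𝔅 ^ (n + 1)) = coeff n (onePow x) := by
  induction n with
  | zero => simp [coeff_onePow, expX, bernoulliPowerSeries]
  | succ n ih =>
    have h := coeff_expX_mul_bernoulli_pow_succ (x + 1) n n
    rw [ih, sub_self, zero_mul] at h
    rw [coeff_onePow] at h ⊢
    rw [prod_range_succ, Nat.factorial_succ, Nat.cast_mul, eq_div_iff (by positivity)]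
    field_simp at h
    push_cast
    linear_combination h

theorem coeff_derivative_logOneAdd (n : ℕ) : coeff n (d⁄dX ℚ logOneAdd) = (-1) ^ n := by
  simp only [coeff_derivative, logOneAdd, coeff_mk, Nat.succ_ne_zero, if_false, pow_succ]
  push_cast
  field_simp

theorem one_add_X_mul_derivative_logOneAdd : (1 + X) * d⁄dX ℚ logOneAdd = 1 := by
  ext n
  rw [add_mul, one_mul, map_add]
  cases n with
  | zero => simp [coeff_derivative_logOneAdd]
  | succ n => simp [coeff_succ_X_mul, coeff_derivative_logOneAdd, pow_succ]

theorem one_add_X_mul_derivative_onePow (x : ℚ) :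
    (1 + X) * d⁄dX ℚ (onePow x) = C x * onePow x := by
  ext n
  rw [add_mul, one_mul, map_add, coeff_C_mul]
  cases n with
  | zero => simp [coeff_derivative, coeff_onePow]
  | succ n =>
    rw [coeff_succ_X_mul, coeff_derivative, coeff_derivative, coeff_onePow, coeff_onePow,
      prod_range_succ, Nat.factorial_succ (n + 1)]
    push_cast
    field_simp
    ring

theorem coeff_logOneAdd_mul_onePow_succ (x : ℚ) (k : ℕ) :
    ((k : ℚ) + 2) * coeff (k + 2) (logOneAdd * onePow x) =
      coeff (k + 1) (onePow x) + (x - k - 1) * coeff (k + 1) (logOneAdd * onePow x) := by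
  have hode : (1 + X) * d⁄dX ℚ (logOneAdd * onePow x) =
      onePow x + C x * (logOneAdd * onePow x) := by
    rw [Derivation.leibniz, smul_eq_mul, smul_eq_mul]
    linear_combination logOneAdd * one_add_X_mul_derivative_onePow x +
      onePow x * one_add_X_mul_derivative_logOneAdd
  have h := congrArg (coeff (k + 1)) hode
  rw [add_mul, one_mul, map_add, coeff_succ_X_mul, coeff_derivative, coeff_derivative, map_add,
    coeff_C_mul] at h
  push_cast at h
  linear_combination h

theorem coeff_logOneAdd_mul_onePow (x : ℚ) (n : ℕ) :
    coeff (n + 1) (logOneAdd * onePow x) = coeff n (expX (x + 1) * 𝔅 ^ (n + 2)) := by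
  induction n with
  | zero => simp [coeff_mul, Nat.antidiagonal_succ, logOneAdd, onePow, expX, bernoulliPowerSeries]
  | succ k ih =>
    have hL := coeff_logOneAdd_mul_onePow_succ x k
    have hB := coeff_expX_mul_bernoulli_pow_succ (x + 1) (k + 1) k
    rw [← ih, coeff_expX_add_one_mul_bernoulli_pow_succ] at hB
    apply mul_left_cancel₀ (by positivity : (k : ℚ) + 2 ≠ 0)
    push_cast at hB ⊢
    linear_combination hL - hB

theorem daehee_poly_eq_higher_bernoulli (Dp : ℕ → ℚ → ℚ) (OB : ℕ → ℚ → ℕ → ℚ)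
    (hDp : ∀ x : ℚ, PowerSeries.mk (fun n => Dp n x / (Nat.factorial n : ℚ)) * PowerSeries.X = logOneAdd * onePow x) (hOB : ∀ (α : ℕ) (x : ℚ), PowerSeries.mk (fun n => OB α x n / (Nat.factorial n : ℚ)) * (PowerSeries.exp ℚ - 1) ^ α = PowerSeries.X ^ α * expX x) :
    ∀ (n : ℕ) (x : ℚ), Dp n x = OB (n + 2) (x + 1) n := by
  intro n x
  have hD : Dp n x / n ! = coeff (n + 1) (logOneAdd * onePow x) := by
    rw [← hDp x, coeff_succ_mul_X, coeff_mk]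
  have hB : OB (n + 2) (x + 1) n / n ! = coeff n (expX (x + 1) * 𝔅 ^ (n + 2)) := by
    rw [← eq_mul_bernoulliPowerSeries_pow_of_mul_exp_sub_one_pow (hOB (n + 2) (x + 1)), coeff_mk]
  rw [← div_left_inj' (by positivity : (n ! : ℚ) ≠ 0), hD, hB, coeff_logOneAdd_mul_onePow]
end

section
/- For all n ≥ 1, (-1)^n Ď_n/n! = ∑_{m=1}^{n} C(n-1, m-1) D_m/m!, where D_m are the Daehee numbers and Ď_n are the Daehee numbers of the second kind. -/
/-!
Both sides have closed forms: `D m / m! = (-1)ᵐ / (m + 1)` and, for `n = k + 1`,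
`Ď n / n! = (-1)ᵏ / ((k + 1)(k + 2))`. After the shift `m = i + 1` the right-hand side becomes
`-∑ᵢ C(k, i) (-1)ⁱ / (i + 2) = -B(2, k + 1) = -1 / ((k + 1)(k + 2))`.
-/

open PowerSeries Finset

open Nat

/- The left-hand side `S k r` is the beta integral `∫₀¹ xʳ (1 - x)ᵏ dx` expanded binomially;
Pascal's rule gives the recursion `S (k + 1) r = S k r - S k (r + 1)`. -/
theorem sum_range_choose_mul_neg_one_pow_div {K : Type*} [Field K] [CharZero K] (k r : ℕ) :
    ∑ i ∈ range (k + 1), (k.choose i : K) * ((-1) ^ i / (i + r + 1)) =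
      k ! * r ! / (k + r + 1)! := by
  induction k generalizing r with
  | zero =>
    have : (r ! : K) ≠ 0 := Nat.cast_ne_zero.mpr (factorial_ne_zero r)
    simp [factorial_succ]
    field_simp
  | succ k ih =>
    have hshift : ∀ i : ℕ, (-1 : K) ^ (i + 1) / ((i + 1 : ℕ) + r + 1) =
        -((-1) ^ i / (i + (r + 1 : ℕ) + 1)) := fun i => by push_cast; ring
    rw [sum_choose_succ_mul (fun i _ => (-1 : K) ^ i / (i + r + 1)) k]
    simp only [hshift, mul_neg, sum_neg_distrib, ih]
    rw [show k + (r + 1) + 1 = (k + r + 1) + 1 by ring, show k + 1 + r + 1 = (k + r + 1) + 1 by ring,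
      factorial_succ (k + r + 1), factorial_succ r, factorial_succ k]
    have : ((k + r + 1)! : K) ≠ 0 := Nat.cast_ne_zero.mpr (factorial_ne_zero _)
    have : (k + r + 1 + 1 : K) ≠ 0 := by exact_mod_cast succ_ne_zero (k + r + 1)
    push_cast
    field_simp
    ring

theorem coeff_succ_logOneAdd (k : ℕ) : coeff (k + 1) logOneAdd = (-1) ^ k / (k + 1) := by
  simp [logOneAdd, pow_succ]

theorem daehee_div_factorial {D : ℕ → ℚ}
    (hD : PowerSeries.mk (fun n => D n / (n ! : ℚ)) * X = logOneAdd) (m : ℕ) :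
    D m / m ! = (-1) ^ m / (m + 1) := by
  simpa [coeff_succ_logOneAdd] using congrArg (coeff (m + 1)) hD

theorem daehee2_succ_div_factorial {Dh : ℕ → ℚ}
    (hDh : PowerSeries.mk (fun n => Dh n / (n ! : ℚ)) * X = (1 + X) * logOneAdd) (k : ℕ) :
    Dh (k + 1) / (k + 1)! = (-1) ^ k / ((k + 1) * (k + 2)) := by
  have h := congrArg (coeff (k + 2)) hDh
  rw [coeff_succ_mul_X, coeff_mk, add_mul, one_mul, map_add, coeff_succ_X_mul,
    coeff_succ_logOneAdd, coeff_succ_logOneAdd] at h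
  rw [h]
  push_cast
  field_simp
  ring

theorem sum_Icc_choose_mul_daehee_div_factorial {D : ℕ → ℚ}
    (hD : PowerSeries.mk (fun n => D n / (n ! : ℚ)) * X = logOneAdd) (k : ℕ) :
    ∑ m ∈ Icc 1 (k + 1), (k.choose (m - 1) : ℚ) * D m / m ! = -1 / ((k + 1) * (k + 2)) := by
  have hterm : ∀ i ∈ range (k + 1), (k.choose (1 + i - 1) : ℚ) * D (1 + i) / (1 + i)! =
      -((k.choose i : ℚ) * ((-1) ^ i / (i + (1 : ℕ) + 1))) := fun i _ => by
    rw [mul_div_assoc, daehee_div_factorial hD, add_comm 1 i, Nat.add_sub_cancel]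
    push_cast
    ring
  rw [← Ico_add_one_right_eq_Icc, sum_Ico_eq_sum_range, Nat.add_sub_cancel, sum_congr rfl hterm,
    sum_neg_distrib, sum_range_choose_mul_neg_one_pow_div, factorial_succ (k + 1), factorial_succ k]
  push_cast
  field_simp
  ring

theorem daehee2_daehee_relation (D Dh : ℕ → ℚ)
    (hD : PowerSeries.mk (fun n => D n / (Nat.factorial n : ℚ)) * PowerSeries.X = logOneAdd) (hDh : PowerSeries.mk (fun n => Dh n / (Nat.factorial n : ℚ)) * PowerSeries.X = (1 + PowerSeries.X) * logOneAdd) :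
    ∀ n : ℕ, 1 ≤ n →
      (-1 : ℚ) ^ n * Dh n / (Nat.factorial n : ℚ) =
        ∑ m ∈ Finset.Icc 1 n, ((n - 1).choose (m - 1) : ℚ) * D m / (Nat.factorial m : ℚ) := by
  intro n hn
  obtain ⟨k, rfl⟩ := Nat.exists_eq_add_of_le' hn
  have hsign : (-1 : ℚ) ^ k * (-1) ^ k = 1 := by rw [← mul_pow]; norm_num
  rw [Nat.add_sub_cancel, sum_Icc_choose_mul_daehee_div_factorial hD, mul_div_assoc,
    daehee2_succ_div_factorial hDh, pow_succ]
  linear_combination (-1 / (((k : ℚ) + 1) * (k + 2))) * hsign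
end
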